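/- arXiv:2604.18848 — 2 statements merged into one kernel-verified Lean document; each statement's English description precedes it below -/
import Mathlib

section
/- For every solution of the delayed Hegselmann–Krause system and almost every t > 2τ, the diameter d_x is differentiable at t and satisfies (d/dt) d_x(t) ≤ 2∫_{t−τ}^{t} d_x(s−τ) ds + 2∫_{t−σ}^{t} d_x(s−τ) ds + 2∫_{t−τ}^{t} ∫_{s−τ}^{s} max_{l} |ẋ_l(r)| dr ds + 2∫_{t−σ}^{t} ∫_{s−τ}^{s} max_{l} |ẋ_l(r)| dr ds − N·a̲(t)·d_x(t). -/
/-
At a time `t` where the diameter is differentiable and positive, let `(i, j)` realise it and let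
`u` be the unit vector along `x i t - x j t`. Comparing `d_x` with `s ↦ ⟪x i s - x j s, u⟫`, which
touches it from below at `t`, gives `d_x'(t) = ⟪ẋ_i - ẋ_j, u⟫`. Agent `i` is extreme in direction
`u` and agent `j` in direction `-u`; after moving every delayed position back to time `t` at the
cost of the displacements `∫ max_l |ẋ_l|`, each interaction term pulls inwards by at least `a̲`
times the projected gap, and the gaps of `i` and `j` add up to `-N d_x(t)`. The displacements are
then estimated once more through `max_l |ẋ_l(s)| ≤ d_x(s - τ) + ∫_{s-τ}^s max_l |ẋ_l|`.
Differentiability almost everywhere is Rademacher's theorem: `d_x` is Lipschitz on compact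
subintervals of `(0, ∞)`, because the velocities are continuous there.
-/

open scoped BigOperators
open MeasureTheory

/-- Diameter of the agent configuration at time `t`. -/
noncomputable def hkDiam {N d : ℕ} (x : Fin N → ℝ → EuclideanSpace ℝ (Fin d)) (t : ℝ) : ℝ :=
  ⨆ i : Fin N, ⨆ j : Fin N, ‖x i t - x j t‖

/-- Maximum of the norms of the derivatives at time `t`. -/
noncomputable def hkMaxDer {N d : ℕ} (x' : Fin N → ℝ → EuclideanSpace ℝ (Fin d)) (t : ℝ) : ℝ :=
  ⨆ i : Fin N, ‖x' i t‖

/-- Minimal communication rate `a̲(t) = min_{i ≠ j} ψ(|x_i(t-σ) - x_j(t-τ)|)/(N-1)`. -/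
noncomputable def hkAMin {N d : ℕ} (ψ : ℝ → ℝ) (σ τ : ℝ)
    (x : Fin N → ℝ → EuclideanSpace ℝ (Fin d)) (t : ℝ) : ℝ :=
  ⨅ p : {p : Fin N × Fin N // p.1 ≠ p.2},
    ψ ‖x p.val.1 (t - σ) - x p.val.2 (t - τ)‖ / (N - 1)

open scoped RealInnerProductSpace
open Set

lemma ContinuousOn.ciSup_apply_of_finite {X L ι : Type*} [TopologicalSpace X]
    [ConditionallyCompleteLattice L] [TopologicalSpace L] [ContinuousSup L]
    [Fintype ι] [Nonempty ι] {f : ι → X → L} {s : Set X} (hf : ∀ i, ContinuousOn (f i) s) :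
    ContinuousOn (fun t => ⨆ i, f i t) s := by
  simpa only [← Finset.sup'_univ_eq_ciSup] using
    ContinuousOn.finset_sup'_apply Finset.univ_nonempty fun i _ => hf i

lemma norm_sub_le_integral_of_norm_deriv_le {E : Type*} [NormedAddCommGroup E]
    [NormedSpace ℝ E] [CompleteSpace E] {f f' : ℝ → E} {B : ℝ → ℝ} {a b : ℝ} (hab : a ≤ b)
    (hf : ∀ t ∈ Icc a b, HasDerivAt f (f' t) t) (hf' : IntervalIntegrable f' volume a b)
    (hB : IntervalIntegrable B volume a b) (hle : ∀ t ∈ Icc a b, ‖f' t‖ ≤ B t) :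
    ‖f b - f a‖ ≤ ∫ t in a..b, B t := by
  rw [← intervalIntegral.integral_eq_sub_of_hasDerivAt (by rwa [uIcc_of_le hab]) hf']
  exact intervalIntegral.norm_integral_le_of_norm_le hab
    (Filter.Eventually.of_forall fun t ht => hle t (Ioc_subset_Icc_self ht)) hB

lemma ae_differentiableAt_of_lipschitzOnWith_Icc {F : Type*} [NormedAddCommGroup F]
    [NormedSpace ℝ F] [FiniteDimensional ℝ F] {f : ℝ → F} {a : ℝ}
    (hf : ∀ b, ∃ K, LipschitzOnWith K f (Icc a b)) :
    ∀ᵐ t, t ∈ Ioi a → DifferentiableAt ℝ f t := by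
  have h_Ioo : ∀ n : ℕ, ∀ᵐ t, t ∈ Ioo a (a + n) → DifferentiableAt ℝ f t := fun n => by
    obtain ⟨K, hK⟩ := hf (a + n)
    filter_upwards [(hK.mono Ioo_subset_Icc_self).ae_differentiableWithinAt_of_mem] with t ht hmem
    exact (ht hmem).differentiableAt (Ioo_mem_nhds hmem.1 hmem.2)
  filter_upwards [ae_all_iff.2 h_Ioo] with t ht hat
  obtain ⟨n, hn⟩ := exists_nat_gt (t - a)
  exact ht n ⟨hat, by linarith⟩

lemma ContinuousOn.intervalIntegral_window {E : Type*} [NormedAddCommGroup E]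
    [NormedSpace ℝ E] {f : ℝ → E} {a b h : ℝ} (hf : ContinuousOn f (Icc a b)) (hh : 0 ≤ h) :
    ContinuousOn (fun s => ∫ r in (s - h)..s, f r) (Icc (a + h) b) := by
  intro s₀ hs₀
  have hab : a ≤ b := by linarith [hs₀.1, hs₀.2]
  have hF := intervalIntegral.continuousOn_primitive_interval'
    (hf.intervalIntegrable_of_Icc (μ := volume) hab) left_mem_uIcc
  rw [uIcc_of_le hab] at hF
  have hint : ∀ s ∈ Icc a b, IntervalIntegrable f volume a s := fun s hs =>
    (hf.mono (Icc_subset_Icc_right hs.2)).intervalIntegrable_of_Icc hs.1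
  refine ((hF.mono fun s hs => ⟨by linarith [hs.1], hs.2⟩).sub
    (hF.comp (continuous_sub_right h).continuousOn fun s hs =>
      ⟨by linarith [hs.1], by linarith [hs.2]⟩)).congr (fun s hs => ?_) s₀ hs₀
  exact (intervalIntegral.integral_interval_sub_left (hint s ⟨by linarith [hs.1], hs.2⟩)
    (hint (s - h) ⟨by linarith [hs.1], by linarith [hs.2]⟩)).symm

lemma abs_real_inner_le_norm_of_norm_le_one {F : Type*} [NormedAddCommGroup F]
    [InnerProductSpace ℝ F] (v : F) {u : F} (hu : ‖u‖ ≤ 1) : |⟪v, u⟫| ≤ ‖v‖ :=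
  (abs_real_inner_le_norm v u).trans (mul_le_of_le_one_right (norm_nonneg v) hu)

lemma Finset.sum_mul_le_mul_sum_add {ι : Type*} (s : Finset ι) {c p q : ι → ℝ} {a w E : ℝ}
    (hc : ∀ k ∈ s, 0 ≤ c k ∧ c k ≤ w) (hca : ∀ k ∈ s, a ≤ c k) (hp : ∀ k ∈ s, p k ≤ 0)
    (hq : ∀ k ∈ s, q k ≤ p k + E) (hE : 0 ≤ E) :
    ∑ k ∈ s, c k * q k ≤ a * ∑ k ∈ s, p k + s.card * w * E := by
  calc ∑ k ∈ s, c k * q k ≤ ∑ k ∈ s, (a * p k + w * E) := Finset.sum_le_sum fun k hk => by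
        obtain ⟨hc0, hcw⟩ := hc k hk
        nlinarith [mul_nonneg hc0 (sub_nonneg.2 (hq k hk)), hca k hk, hp k hk,
          mul_nonneg (sub_nonneg.2 (hca k hk)) (neg_nonneg.2 (hp k hk)),
          mul_nonneg (sub_nonneg.2 hcw) hE]
    _ = a * ∑ k ∈ s, p k + s.card * w * E := by
        rw [Finset.sum_add_distrib, Finset.mul_sum, Finset.sum_const, nsmul_eq_mul]; ring

lemma Finset.sum_erase_sub_add_sum_erase_sub {ι : Type*} [Fintype ι] [DecidableEq ι]
    (g : ι → ℝ) (i j : ι) :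
    ∑ k ∈ Finset.univ.erase i, (g k - g i) + ∑ k ∈ Finset.univ.erase j, (g j - g k)
      = -(Fintype.card ι * (g i - g j)) := by
  rw [Finset.sum_erase _ (sub_self _), Finset.sum_erase _ (sub_self _), Finset.sum_sub_distrib,
    Finset.sum_sub_distrib, Finset.sum_const, Finset.sum_const, Finset.card_univ, nsmul_eq_mul,
    nsmul_eq_mul]
  ring

section Configuration

variable {N d : ℕ} (x : Fin N → ℝ → EuclideanSpace ℝ (Fin d)) (t : ℝ)

lemma norm_sub_le_hkDiam (i j : Fin N) : ‖x i t - x j t‖ ≤ hkDiam x t :=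
  (le_ciSup (Finite.bddAbove_range _) j).trans
    (le_ciSup (Finite.bddAbove_range fun i => ⨆ j, ‖x i t - x j t‖) i)

lemma exists_hkDiam_eq [NeZero N] : ∃ i j, hkDiam x t = ‖x i t - x j t‖ := by
  obtain ⟨i, hi⟩ := exists_eq_ciSup_of_finite (f := fun i => ⨆ j, ‖x i t - x j t‖)
  obtain ⟨j, hj⟩ := exists_eq_ciSup_of_finite (f := fun j => ‖x i t - x j t‖)
  exact ⟨i, j, by rw [hkDiam, ← hi, hj]⟩

lemma hkDiam_nonneg [NeZero N] : 0 ≤ hkDiam x t :=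
  (norm_nonneg _).trans (norm_sub_le_hkDiam x t 0 0)

lemma norm_le_hkMaxDer (i : Fin N) : ‖x i t‖ ≤ hkMaxDer x t :=
  le_ciSup (Finite.bddAbove_range fun i => ‖x i t‖) i

lemma hkMaxDer_nonneg [NeZero N] : 0 ≤ hkMaxDer x t :=
  (norm_nonneg _).trans (norm_le_hkMaxDer x t 0)

lemma hkAMin_le (ψ : ℝ → ℝ) (σ τ : ℝ) {i j : Fin N} (hij : i ≠ j) :
    hkAMin ψ σ τ x t ≤ ψ ‖x i (t - σ) - x j (t - τ)‖ / (N - 1) :=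
  ciInf_le (Finite.bddBelow_range _) (⟨(i, j), hij⟩ : {p : Fin N × Fin N // p.1 ≠ p.2})

lemma continuousOn_hkMaxDer [NeZero N] {s : Set ℝ} (hx : ∀ i, ContinuousOn (x i) s) :
    ContinuousOn (hkMaxDer x) s :=
  ContinuousOn.ciSup_apply_of_finite fun i => (hx i).norm

lemma exists_unit_inner_eq_hkDiam [NeZero N] (hpos : 0 < hkDiam x t) :
    ∃ (i j : Fin N) (u : EuclideanSpace ℝ (Fin d)), ‖u‖ = 1 ∧
      ⟪x i t - x j t, u⟫ = hkDiam x t ∧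
      (∀ k, ⟪x k t, u⟫ ≤ ⟪x i t, u⟫) ∧ ∀ k, ⟪x j t, u⟫ ≤ ⟪x k t, u⟫ := by
  obtain ⟨i, j, hij⟩ := exists_hkDiam_eq x t
  set u := (hkDiam x t)⁻¹ • (x i t - x j t)
  have hu : ‖u‖ = 1 := by
    rw [norm_smul, norm_inv, Real.norm_of_nonneg hpos.le, ← hij, inv_mul_cancel₀ hpos.ne']
  have hiju : ⟪x i t - x j t, u⟫ = hkDiam x t := by
    rw [real_inner_smul_right, real_inner_self_eq_norm_sq, ← hij]
    field_simp
  have hle : ∀ k l, ⟪x k t - x l t, u⟫ ≤ hkDiam x t := fun k l =>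
    (le_abs_self _).trans <|
      (abs_real_inner_le_norm_of_norm_le_one _ hu.le).trans (norm_sub_le_hkDiam x t k l)
  refine ⟨i, j, u, hu, hiju, fun k => ?_, fun k => ?_⟩
  · linarith [hle k j, inner_sub_left (𝕜 := ℝ) (x k t) (x j t) u,
    inner_sub_left (𝕜 := ℝ) (x i t) (x j t) u, hiju]
  · linarith [hle i k, inner_sub_left (𝕜 := ℝ) (x i t) (x k t) u,
    inner_sub_left (𝕜 := ℝ) (x i t) (x j t) u, hiju]

end Configuration

-- The right-hand side of the delayed system: `hode` in `stmt_3` is `x' i t = hkField ψ σ τ x i t`.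
noncomputable def hkField {N d : ℕ} (ψ : ℝ → ℝ) (σ τ : ℝ)
    (x : Fin N → ℝ → EuclideanSpace ℝ (Fin d)) (i : Fin N) (t : ℝ) : EuclideanSpace ℝ (Fin d) :=
  ∑ j ∈ Finset.univ.erase i, (ψ ‖x i (t - σ) - x j (t - τ)‖ / (N - 1)) • (x j (t - τ) - x i (t - σ))

section Dynamics

variable {N d : ℕ} {ψ : ℝ → ℝ} {σ τ : ℝ} {x x' : Fin N → ℝ → EuclideanSpace ℝ (Fin d)}

lemma card_univ_erase_fin (hN : 1 ≤ N) (i : Fin N) :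
    ((Finset.univ.erase i).card : ℝ) = N - 1 := by
  rw [Finset.card_erase_of_mem (Finset.mem_univ i), Finset.card_univ, Fintype.card_fin,
    Nat.cast_sub hN, Nat.cast_one]

lemma natCast_sub_one_pos (hN : 2 ≤ N) : (0 : ℝ) < N - 1 := by
  have : (2 : ℝ) ≤ N := by exact_mod_cast hN
  linarith

lemma div_natCast_sub_one_mem_Icc (hN : 2 ≤ N) {a : ℝ} (ha₀ : 0 ≤ a) (ha₁ : a ≤ 1) :
    a / ((N : ℝ) - 1) ∈ Icc 0 (1 / ((N : ℝ) - 1)) :=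
  have hN' := (natCast_sub_one_pos hN).le
  ⟨div_nonneg ha₀ hN', div_le_div_of_nonneg_right ha₁ hN'⟩

lemma continuousOn_hkField (hψ : ContinuousOn ψ (Ici 0))
    (hx : ∀ i, ContinuousOn (x i) (Ici (-τ))) (hστ : σ ≤ τ) (i : Fin N) :
    ContinuousOn (hkField ψ σ τ x i) (Ioi 0) := by
  have hshift : ∀ k c, c ≤ τ → ContinuousOn (fun t => x k (t - c)) (Ioi 0) := fun k c hc =>
    (hx k).comp (continuous_sub_right c).continuousOn fun t ht => by
      simp only [mem_Ici]; linarith [mem_Ioi.1 ht]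
  refine continuousOn_finsetSum _ fun j _ => ?_
  exact ((hψ.comp ((hshift i σ hστ).sub (hshift j τ le_rfl)).norm
    fun _ _ => norm_nonneg _).div_const _).smul ((hshift j τ le_rfl).sub (hshift i σ hστ))

lemma inner_hkField_le (hN : 2 ≤ N) (hψ₀ : ∀ s, 0 ≤ s → 0 ≤ ψ s)
    (hψ₁ : ∀ s, 0 ≤ s → ψ s ≤ 1) {t Iτ Iσ : ℝ} {u : EuclideanSpace ℝ (Fin d)} (hu : ‖u‖ ≤ 1)
    {i : Fin N} (hi : ∀ k, ⟪x k t, u⟫ ≤ ⟪x i t, u⟫)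
    (hIτ : ∀ k, ‖x k t - x k (t - τ)‖ ≤ Iτ) (hIσ : ∀ k, ‖x k t - x k (t - σ)‖ ≤ Iσ) :
    ⟪hkField ψ σ τ x i t, u⟫
      ≤ hkAMin ψ σ τ x t * ∑ k ∈ Finset.univ.erase i, (⟪x k t, u⟫ - ⟪x i t, u⟫) + (Iτ + Iσ) := by
  have hE : 0 ≤ Iτ + Iσ :=
    add_nonneg ((norm_nonneg _).trans (hIτ i)) ((norm_nonneg _).trans (hIσ i))
  have hq : ∀ k, ⟪x k (t - τ) - x i (t - σ), u⟫ ≤ ⟪x k t, u⟫ - ⟪x i t, u⟫ + (Iτ + Iσ) := by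
    intro k
    have hτk := abs_le.1 (abs_real_inner_le_norm_of_norm_le_one (x k t - x k (t - τ)) hu)
    have hσi := abs_le.1 (abs_real_inner_le_norm_of_norm_le_one (x i t - x i (t - σ)) hu)
    have hsplit : x k (t - τ) - x i (t - σ)
        = x k t - x i t - (x k t - x k (t - τ)) + (x i t - x i (t - σ)) := by abel
    rw [hsplit, inner_add_left, inner_sub_left, inner_sub_left]
    linarith [hIτ k, hIσ i]
  have key := (Finset.univ.erase i).sum_mul_le_mul_sum_add
    (fun k _ => div_natCast_sub_one_mem_Icc hN (hψ₀ _ (norm_nonneg _)) (hψ₁ _ (norm_nonneg _)))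
    (fun k hk => hkAMin_le x t ψ σ τ (Finset.ne_of_mem_erase hk).symm)
    (fun k _ => sub_nonpos.2 (hi k)) (fun k _ => hq k) hE
  have hN' : (N : ℝ) - 1 ≠ 0 := (natCast_sub_one_pos hN).ne'
  rw [card_univ_erase_fin (by omega), mul_one_div_cancel hN', one_mul] at key
  simpa only [hkField, sum_inner, real_inner_smul_left] using key

lemma norm_hkField_le (hN : 2 ≤ N) (hψ₀ : ∀ s, 0 ≤ s → 0 ≤ ψ s)
    (hψ₁ : ∀ s, 0 ≤ s → ψ s ≤ 1) {t B : ℝ} {i : Fin N}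
    (hB : ∀ k, ‖x k (t - τ) - x i (t - σ)‖ ≤ B) : ‖hkField ψ σ τ x i t‖ ≤ B := by
  have hN' : (N : ℝ) - 1 ≠ 0 := (natCast_sub_one_pos hN).ne'
  calc ‖hkField ψ σ τ x i t‖ ≤ ∑ k ∈ Finset.univ.erase i, 1 / ((N : ℝ) - 1) * B := by
        rw [hkField]
        refine (norm_sum_le _ _).trans (Finset.sum_le_sum fun k _ => ?_)
        have hr := norm_nonneg (x i (t - σ) - x k (t - τ))
        obtain ⟨hw₀, hw₁⟩ := div_natCast_sub_one_mem_Icc hN (hψ₀ _ hr) (hψ₁ _ hr)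
        rw [norm_smul, Real.norm_of_nonneg hw₀]
        exact mul_le_mul hw₁ (hB k) (norm_nonneg _) (hw₀.trans hw₁)
    _ = B := by
        rw [Finset.sum_const, nsmul_eq_mul, card_univ_erase_fin (by omega), ← mul_assoc,
          mul_one_div_cancel hN', one_mul]

lemma HasDerivAt.eq_inner_of_inner_eq_hkDiam {t D : ℝ} {i j : Fin N}
    {u vi vj : EuclideanSpace ℝ (Fin d)} (hD : HasDerivAt (hkDiam x) D t) (hu : ‖u‖ ≤ 1)
    (hi : HasDerivAt (x i) vi t) (hj : HasDerivAt (x j) vj t)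
    (heq : ⟪x i t - x j t, u⟫ = hkDiam x t) : D = ⟪vi - vj, u⟫ := by
  have hφ : HasDerivAt (fun s => ⟪x i s - x j s, u⟫) ⟪vi - vj, u⟫ t := by
    simpa using (hi.sub hj).inner ℝ (hasDerivAt_const t u)
  -- `s ↦ ⟪x i s - x j s, u⟫` touches the diameter from below at `t`
  have hmin : IsLocalMin (fun s => hkDiam x s - ⟪x i s - x j s, u⟫) t :=
    Filter.Eventually.of_forall fun s => by
      have := (le_abs_self _).trans <|
        (abs_real_inner_le_norm_of_norm_le_one (x i s - x j s) hu).trans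
          (norm_sub_le_hkDiam x s i j)
      simp only [heq, sub_self]
      linarith
  linarith [hmin.hasDerivAt_eq_zero (hD.sub hφ)]

lemma le_of_hasDerivAt_hkDiam (hN : 2 ≤ N) (hψ₀ : ∀ s, 0 ≤ s → 0 ≤ ψ s)
    (hψ₁ : ∀ s, 0 ≤ s → ψ s ≤ 1) {t D Iτ Iσ : ℝ}
    (hder : ∀ i, HasDerivAt (x i) (x' i t) t) (hode : ∀ i, x' i t = hkField ψ σ τ x i t)
    (hD : HasDerivAt (hkDiam x) D t)
    (hIτ : ∀ k, ‖x k t - x k (t - τ)‖ ≤ Iτ) (hIσ : ∀ k, ‖x k t - x k (t - σ)‖ ≤ Iσ) :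
    D ≤ 2 * Iτ + 2 * Iσ - N * hkAMin ψ σ τ x t * hkDiam x t := by
  have : NeZero N := ⟨by omega⟩
  have hE : 0 ≤ Iτ + Iσ :=
    add_nonneg ((norm_nonneg _).trans (hIτ 0)) ((norm_nonneg _).trans (hIσ 0))
  rcases (hkDiam_nonneg x t).eq_or_lt with h0 | hpos
  · have hmin : IsLocalMin (hkDiam x) t :=
      Filter.Eventually.of_forall fun s => h0 ▸ hkDiam_nonneg x s
    rw [hmin.hasDerivAt_eq_zero hD, ← h0]
    linarith
  obtain ⟨i, j, u, hu, hiju, hi, hj⟩ := exists_unit_inner_eq_hkDiam x t hpos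
  have hDu := hD.eq_inner_of_inner_eq_hkDiam hu.le (hder i) (hder j) hiju
  rw [hode i, hode j, inner_sub_left] at hDu
  have hxi := inner_hkField_le hN hψ₀ hψ₁ hu.le hi hIτ hIσ
  have hxj := inner_hkField_le (u := -u) hN hψ₀ hψ₁ (by rw [norm_neg]; exact hu.le) (i := j)
    (fun k => by simpa only [inner_neg_right, neg_le_neg_iff] using hj k) hIτ hIσ
  simp only [inner_neg_right, neg_sub_neg] at hxj
  have hsum := Finset.sum_erase_sub_add_sum_erase_sub (fun k => ⟪x k t, u⟫) i j
  rw [Fintype.card_fin, ← inner_sub_left, hiju] at hsum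
  have hsum' : hkAMin ψ σ τ x t * ∑ k ∈ Finset.univ.erase i, (⟪x k t, u⟫ - ⟪x i t, u⟫)
      + hkAMin ψ σ τ x t * ∑ k ∈ Finset.univ.erase j, (⟪x j t, u⟫ - ⟪x k t, u⟫)
      = -(N * hkAMin ψ σ τ x t * hkDiam x t) := by
    rw [← mul_add, hsum]; ring
  linarith

lemma hkMaxDer_le_hkDiam_add (hN : 2 ≤ N) (hψ₀ : ∀ s, 0 ≤ s → 0 ≤ ψ s)
    (hψ₁ : ∀ s, 0 ≤ s → ψ s ≤ 1) {s J : ℝ} (hode : ∀ l, x' l s = hkField ψ σ τ x l s)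
    (hJ : ∀ l, ‖x l (s - τ) - x l (s - σ)‖ ≤ J) : hkMaxDer x' s ≤ hkDiam x (s - τ) + J := by
  have : NeZero N := ⟨by omega⟩
  refine ciSup_le fun l => (hode l).symm ▸ norm_hkField_le hN hψ₀ hψ₁ fun k => ?_
  exact (norm_sub_le_norm_sub_add_norm_sub _ (x l (s - τ)) _).trans
    (add_le_add (norm_sub_le_hkDiam x _ k l) (hJ l))

lemma lipschitzOnWith_hkDiam [NeZero N] {s : Set ℝ} {K : NNReal}
    (hx : ∀ k, LipschitzOnWith K (x k) s) : LipschitzOnWith (2 * K) (hkDiam x) s := by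
  refine LipschitzOnWith.of_le_add_mul _ fun u hu v hv => ?_
  obtain ⟨i, j, hij⟩ := exists_hkDiam_eq x u
  have hi := (hx i).dist_le_mul u hu v hv
  have hj := (hx j).dist_le_mul u hu v hv
  rw [dist_eq_norm] at hi hj
  have htri : ‖x i u - x j u‖ ≤ ‖x i v - x j v‖ + ‖x i u - x i v‖ + ‖x j u - x j v‖ :=
    calc ‖x i u - x j u‖ = ‖x i v - x j v + (x i u - x i v) - (x j u - x j v)‖ := by
          congr 1; abel
      _ ≤ _ := (norm_sub_le _ _).trans (add_le_add_left (norm_add_le _ _) _)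
  push_cast
  linarith [norm_sub_le_hkDiam x v i j]

lemma norm_sub_le_integral_hkMaxDer [NeZero N]
    (hder : ∀ i, ∀ t > 0, HasDerivAt (x i) (x' i t) t) (hx' : ∀ i, ContinuousOn (x' i) (Ioi 0))
    {a b : ℝ} (ha : 0 < a) (hab : a ≤ b) (k : Fin N) :
    ‖x k b - x k a‖ ≤ ∫ r in a..b, hkMaxDer x' r := by
  have hsub : Icc a b ⊆ Ioi 0 := fun r hr => ha.trans_le hr.1
  exact norm_sub_le_integral_of_norm_deriv_le hab (fun r hr => hder k r (hsub hr))
    (((hx' k).mono hsub).intervalIntegrable_of_Icc hab)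
    (((continuousOn_hkMaxDer x' hx').mono hsub).intervalIntegrable_of_Icc hab)
    fun r _ => norm_le_hkMaxDer x' r k

lemma exists_lipschitzOnWith_hkDiam_Icc [NeZero N]
    (hder : ∀ i, ∀ t > 0, HasDerivAt (x i) (x' i t) t) (hx' : ∀ i, ContinuousOn (x' i) (Ioi 0))
    {a : ℝ} (ha : 0 < a) (b : ℝ) : ∃ K, LipschitzOnWith K (hkDiam x) (Icc a b) := by
  have hsub : Icc a b ⊆ Ioi 0 := fun r hr => ha.trans_le hr.1
  obtain ⟨C, hC⟩ :=
    isCompact_Icc.exists_bound_of_continuousOn ((continuousOn_hkMaxDer x' hx').mono hsub)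
  refine ⟨2 * C.toNNReal, lipschitzOnWith_hkDiam fun k =>
    (convex_Icc a b).lipschitzOnWith_of_nnnorm_hasDerivWithin_le
      (fun r hr => (hder k r (hsub hr)).hasDerivWithinAt) fun r hr => ?_⟩
  rw [← NNReal.coe_le_coe, coe_nnnorm]
  exact (norm_le_hkMaxDer x' r k).trans <|
    (le_abs_self _).trans <| (hC r hr).trans (Real.le_coe_toNNReal C)

lemma hkMaxDer_le_hkDiam_add_integral (hN : 2 ≤ N) (hψ₀ : ∀ s, 0 ≤ s → 0 ≤ ψ s)
    (hψ₁ : ∀ s, 0 ≤ s → ψ s ≤ 1) (hσ : 0 ≤ σ) (hστ : σ ≤ τ)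
    (hder : ∀ i, ∀ t > 0, HasDerivAt (x i) (x' i t) t)
    (hode : ∀ i, ∀ t > 0, x' i t = hkField ψ σ τ x i t) (hx' : ∀ i, ContinuousOn (x' i) (Ioi 0))
    {s : ℝ} (hs : τ < s) :
    hkMaxDer x' s ≤ hkDiam x (s - τ) + ∫ r in (s - τ)..s, hkMaxDer x' r := by
  have : NeZero N := ⟨by omega⟩
  have hM : ContinuousOn (hkMaxDer x') (Icc (s - τ) s) :=
    (continuousOn_hkMaxDer x' hx').mono fun r hr => by simp only [mem_Ioi]; linarith [hr.1]
  refine hkMaxDer_le_hkDiam_add hN hψ₀ hψ₁ (fun l => hode l s (by linarith)) fun l => ?_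
  rw [norm_sub_rev]
  exact (norm_sub_le_integral_hkMaxDer hder hx' (by linarith) (by linarith) l).trans <|
    intervalIntegral.integral_mono_interval le_rfl (by linarith) (by linarith)
      (Filter.Eventually.of_forall fun r => hkMaxDer_nonneg x' r)
      (hM.intervalIntegrable_of_Icc (by linarith))

lemma integral_hkMaxDer_le (hN : 2 ≤ N) (hψ₀ : ∀ s, 0 ≤ s → 0 ≤ ψ s)
    (hψ₁ : ∀ s, 0 ≤ s → ψ s ≤ 1) (hσ : 0 ≤ σ) (hστ : σ ≤ τ)
    (hder : ∀ i, ∀ t > 0, HasDerivAt (x i) (x' i t) t)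
    (hode : ∀ i, ∀ t > 0, x' i t = hkField ψ σ τ x i t) (hx' : ∀ i, ContinuousOn (x' i) (Ioi 0))
    {t c : ℝ} (ht : 2 * τ < t) (hc : 0 ≤ c) (hcτ : c ≤ τ) :
    ∫ s in (t - c)..t, hkMaxDer x' s
      ≤ (∫ s in (t - c)..t, hkDiam x (s - τ))
        + ∫ s in (t - c)..t, ∫ r in (s - τ)..s, hkMaxDer x' r := by
  have : NeZero N := ⟨by omega⟩
  have hM : ContinuousOn (hkMaxDer x') (Icc (t - 2 * τ) t) :=
    (continuousOn_hkMaxDer x' hx').mono fun r hr => by simp only [mem_Ioi]; linarith [hr.1]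
  have hdiam : ContinuousOn (fun s => hkDiam x (s - τ)) (Icc (t - c) t) := by
    obtain ⟨K, hK⟩ := exists_lipschitzOnWith_hkDiam_Icc hder hx' (a := t - 2 * τ) (by linarith)
      (t - τ)
    exact hK.continuousOn.comp (continuous_sub_right τ).continuousOn fun s hs =>
      ⟨by linarith [hs.1], by linarith [hs.2]⟩
  have hwindow : ContinuousOn (fun s => ∫ r in (s - τ)..s, hkMaxDer x' r) (Icc (t - c) t) :=
    (hM.intervalIntegral_window (hσ.trans hστ)).mono fun s hs =>
      ⟨by linarith [hs.1], hs.2⟩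
  have htc : t - c ≤ t := by linarith
  rw [← intervalIntegral.integral_add (hdiam.intervalIntegrable_of_Icc htc)
    (hwindow.intervalIntegrable_of_Icc htc)]
  exact intervalIntegral.integral_mono_on htc
    ((hM.mono fun s hs => ⟨by linarith [hs.1], hs.2⟩).intervalIntegrable_of_Icc htc)
    ((hdiam.add hwindow).intervalIntegrable_of_Icc htc) fun s hs =>
      hkMaxDer_le_hkDiam_add_integral hN hψ₀ hψ₁ hσ hστ hder hode hx' (by linarith [hs.1])

end Dynamics

theorem stmt_3_general
    (N d : ℕ) (hN : 2 ≤ N)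
    (σ τ : ℝ) (hσ : 0 ≤ σ) (hστ : σ ≤ τ) (hτ : 0 < τ)
    (ψ : ℝ → ℝ)
    (hψpos : ∀ s, 0 ≤ s → 0 < ψ s)
    (hψcont : ContinuousOn ψ (Set.Ici 0))
    (hψbdd : ∀ s, 0 ≤ s → ψ s ≤ 1)
    (x x' : Fin N → ℝ → EuclideanSpace ℝ (Fin d))
    (hxc : ∀ i, ContinuousOn (x i) (Set.Ici (-τ)))
    (hder : ∀ i, ∀ t > (0:ℝ), HasDerivAt (x i) (x' i t) t)
    (hode : ∀ i, ∀ t > (0:ℝ),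
      x' i t = ∑ j ∈ Finset.univ.erase i,
        (ψ ‖x i (t - σ) - x j (t - τ)‖ / (N - 1)) • (x j (t - τ) - x i (t - σ))) :
    ∀ᵐ t ∂(volume : Measure ℝ), t ∈ Set.Ioi (2 * τ) →
      ∃ D : ℝ, HasDerivAt (hkDiam x) D t ∧
        D ≤ 2 * (∫ s in (t - τ)..t, hkDiam x (s - τ))
          + 2 * (∫ s in (t - σ)..t, hkDiam x (s - τ))
          + 2 * (∫ s in (t - τ)..t, ∫ r in (s - τ)..s, hkMaxDer x' r)
          + 2 * (∫ s in (t - σ)..t, ∫ r in (s - τ)..s, hkMaxDer x' r)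
          - N * hkAMin ψ σ τ x t * hkDiam x t := by
  have : NeZero N := ⟨by omega⟩
  have hψ₀ : ∀ s, 0 ≤ s → 0 ≤ ψ s := fun s hs => (hψpos s hs).le
  have hx' : ∀ i, ContinuousOn (x' i) (Ioi 0) := fun i =>
    (continuousOn_hkField hψcont hxc hστ i).congr fun t ht => hode i t ht
  filter_upwards [ae_differentiableAt_of_lipschitzOnWith_Icc
    (exists_lipschitzOnWith_hkDiam_Icc hder hx' (by positivity : 0 < 2 * τ))] with t hdiff ht
  have ht : 2 * τ < t := ht
  have hD := (hdiff ht).hasDerivAt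
  refine ⟨_, hD, ?_⟩
  have hderiv := le_of_hasDerivAt_hkDiam hN hψ₀ hψbdd (fun i => hder i t (by linarith))
    (fun i => hode i t (by linarith)) hD
    (fun k => norm_sub_le_integral_hkMaxDer hder hx' (by linarith) (by linarith) k)
    (fun k => norm_sub_le_integral_hkMaxDer hder hx' (by linarith) (by linarith) k)
  have hintτ := integral_hkMaxDer_le hN hψ₀ hψbdd hσ hστ hder hode hx' ht hτ.le le_rfl
  have hintσ := integral_hkMaxDer_le hN hψ₀ hψbdd hσ hστ hder hode hx' ht hσ hστ
  linarith

theorem stmt_3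
    (N d : ℕ) (hN : 2 ≤ N) (hd : 1 ≤ d)
    (σ τ : ℝ) (hσ : 0 ≤ σ) (hστ : σ ≤ τ) (hτ : 0 < τ)
    (ψ : ℝ → ℝ)
    (hψpos : ∀ s, 0 ≤ s → 0 < ψ s)
    (hψcont : ContinuousOn ψ (Set.Ici 0))
    (hψmono : ∀ s t, 0 ≤ s → s ≤ t → ψ t ≤ ψ s)
    (hψbdd : ∀ s, 0 ≤ s → ψ s ≤ 1)
    (x x' : Fin N → ℝ → EuclideanSpace ℝ (Fin d))
    (hxc : ∀ i, ContinuousOn (x i) (Set.Ici (-τ)))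
    (hder : ∀ i, ∀ t > (0:ℝ), HasDerivAt (x i) (x' i t) t)
    (hode : ∀ i, ∀ t > (0:ℝ),
      x' i t = ∑ j ∈ Finset.univ.erase i,
        (ψ ‖x i (t - σ) - x j (t - τ)‖ / (N - 1)) • (x j (t - τ) - x i (t - σ))) :
    ∀ᵐ t ∂(volume : Measure ℝ), t ∈ Set.Ioi (2 * τ) →
      ∃ D : ℝ, HasDerivAt (hkDiam x) D t ∧
        D ≤ 2 * (∫ s in (t - τ)..t, hkDiam x (s - τ))
          + 2 * (∫ s in (t - σ)..t, hkDiam x (s - τ))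
          + 2 * (∫ s in (t - τ)..t, ∫ r in (s - τ)..s, hkMaxDer x' r)
          + 2 * (∫ s in (t - σ)..t, ∫ r in (s - τ)..s, hkMaxDer x' r)
          - N * hkAMin ψ σ τ x t * hkDiam x t :=
  stmt_3_general N d hN σ τ hσ hστ hτ ψ hψpos hψcont hψbdd x x' hxc hder hode
end

section
/- Let 0 < σ ≤ τ, let K := ⌈2τ/σ⌉ (the smallest integer with Kσ ≥ 2τ), and let β > 0. Then for every solution of the delayed Hegselmann–Krause system, the Lyapunov–Krasovskii functional satisfies F(t) ≤ 𝒵^K_σ · Δ^0_x for all t ∈ [0, 2τ]. -/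
open scoped BigOperators
open MeasureTheory

/-- Lyapunov–Krasovskii functional
`F(t) = d_x(t) + β ∫_{max(0,t-2τ)}^t e^{-(t-s)} ∫_s^t max_i |ẋ_i(r)| dr ds`. -/
noncomputable def hkF {N d : ℕ} (β τ : ℝ)
    (x x' : Fin N → ℝ → EuclideanSpace ℝ (Fin d)) (t : ℝ) : ℝ :=
  hkDiam x t +
    β * ∫ s in (max 0 (t - 2 * τ))..t, Real.exp (-(t - s)) * ∫ r in s..t, hkMaxDer x' r

/-- `Δ^0_x = max_{i,j} max_{s,t ∈ [-τ,0]} |x_i(s) - x_j(t)|`. -/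
noncomputable def hkDelta0 {N d : ℕ} (τ : ℝ)
    (x : Fin N → ℝ → EuclideanSpace ℝ (Fin d)) : ℝ :=
  ⨆ i : Fin N, ⨆ j : Fin N, ⨆ s : Set.Icc (-τ) (0:ℝ), ⨆ t : Set.Icc (-τ) (0:ℝ),
    ‖x i s - x j t‖

/-- Closed-form sequence `Z^k_σ`. -/
noncomputable def hkZ (σ : ℝ) (k : ℕ) : ℝ :=
  (((1 + σ) + Real.sqrt (σ * (1 + σ))) ^ (k + 1)
    - ((1 + σ) - Real.sqrt (σ * (1 + σ))) ^ (k + 1)) / (2 * Real.sqrt (σ * (1 + σ)))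

/-- `𝒵^K_σ = Z^K_σ + Z^{K-1}_σ · β (1 - (1+2τ) e^{-2τ})`. -/
noncomputable def hkCalZ (σ τ β : ℝ) (K : ℕ) : ℝ :=
  hkZ σ K + hkZ σ (K - 1) * (β * (1 - (1 + 2 * τ) * Real.exp (-(2 * τ))))

/-!
Let `Q_k` bound `‖x i s - x j u‖` for all `s, u ∈ [-τ, kσ]`, with `Q_0 = Δ⁰ₓ`. For
`r ∈ (kσ, (k+1)σ]` both delayed times `r - σ`, `r - τ` lie in `[-τ, kσ]`, and as `0 ≤ ψ ≤ 1`
the right-hand side of the system is a sum of `N - 1` vectors of length at most `Q_k / (N - 1)`;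
so `‖ẋ_i‖ ≤ Q_k` there. Moving each time argument back into `[-τ, kσ]` costs at most `σ Q_k`,
whence `Q_{k+1} ≤ (1 + 2σ) Q_k` and `Q_k ≤ (1 + 2σ)^k Δ⁰ₓ ≤ Z^k_σ Δ⁰ₓ`. As `Kσ ≥ 2τ`, on
`[0, 2τ]` the diameter is at most `Z^K_σ Δ⁰ₓ` and every speed at most `M = Z^{K-1}_σ Δ⁰ₓ`, so
the integral term of `F(t)` is at most `β M ∫₀ᵗ e^{-(t-s)} (t - s) ds = β M (1 - (1 + t) e^{-t})`,
which is increasing in `t`.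
-/

open Set Real

theorem norm_sub_le_of_hasDerivAt_Ioc {E : Type*} [NormedAddCommGroup E] [NormedSpace ℝ E]
    {f f' : ℝ → E} {a b C : ℝ} (hab : a ≤ b) (hf : ContinuousOn f (Icc a b))
    (hf' : ∀ r ∈ Ioc a b, HasDerivAt f (f' r) r) (bound : ∀ r ∈ Ioc a b, ‖f' r‖ ≤ C) :
    ‖f b - f a‖ ≤ C * (b - a) := by
  -- The one-sided mean value inequality wants right derivatives on `[a, b)`; reflecting turns
  -- our derivatives on `(a, b]` into such.
  have hg : ContinuousOn (fun s => f (-s)) (Icc (-b) (-a)) :=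
    hf.comp continuous_neg.continuousOn fun s hs => ⟨le_neg.mp hs.2, neg_le.mp hs.1⟩
  have hg' : ∀ s ∈ Ico (-b) (-a), HasDerivWithinAt (fun s => f (-s)) (-f' (-s)) (Ici s) s :=
    fun s hs => by
      have := (hf' (-s) ⟨lt_neg.mp hs.2, neg_le.mp hs.1⟩).scomp s (hasDerivAt_neg s)
      simpa [Function.comp_def] using this.hasDerivWithinAt
  have := norm_image_sub_le_of_norm_deriv_right_le_segment hg hg'
    (fun s hs => by simpa using bound (-s) ⟨lt_neg.mp hs.2, neg_le.mp hs.1⟩)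
    (-a) ⟨neg_le_neg hab, le_rfl⟩
  simpa [norm_sub_rev, neg_add_eq_sub] using this

section Trajectories

variable {ι E : Type*} [NormedAddCommGroup E]

/-- `⋃ i, x i '' S` has diameter at most `Q`; `hkDelta0 τ x` is the least such `Q` for
`S = [-τ, 0]`. -/
def TrajectoryDiamLE (x : ι → ℝ → E) (S : Set ℝ) (Q : ℝ) : Prop :=
  ∀ i j, ∀ s ∈ S, ∀ u ∈ S, ‖x i s - x j u‖ ≤ Q

def SpeedLEDelayedDiam (x x' : ι → ℝ → E) (σ τ : ℝ) : Prop :=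
  ∀ r > 0, ∀ Q, (∀ i j, ‖x i (r - σ) - x j (r - τ)‖ ≤ Q) → ∀ i, ‖x' i r‖ ≤ Q

variable {x x' : ι → ℝ → E} {σ τ a Q : ℝ}

theorem TrajectoryDiamLE.norm_deriv_le (hστ : σ ≤ τ)
    (hspeed : SpeedLEDelayedDiam x x' σ τ)
    (h : TrajectoryDiamLE x (Icc (-τ) a) Q) {r : ℝ} (hr0 : 0 < r) (hr : r ≤ a + σ) (i : ι) :
    ‖x' i r‖ ≤ Q :=
  hspeed r hr0 Q (fun i j => h i j _ ⟨by linarith, by linarith⟩ _ ⟨by linarith, by linarith⟩) i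

theorem TrajectoryDiamLE.extend [NormedSpace ℝ E] (hσ : 0 < σ) (hστ : σ ≤ τ) (ha : 0 ≤ a)
    (hcont : ∀ i, ContinuousOn (x i) (Ici (-τ)))
    (hder : ∀ i, ∀ t > 0, HasDerivAt (x i) (x' i t) t)
    (hspeed : SpeedLEDelayedDiam x x' σ τ)
    (h : TrajectoryDiamLE x (Icc (-τ) a) Q) :
    TrajectoryDiamLE x (Icc (-τ) (a + σ)) ((1 + 2 * σ) * Q) := by
  have ha_mem : a ∈ Icc (-τ) a := ⟨by linarith, le_rfl⟩
  have retract : ∀ i, ∀ v ∈ Icc (-τ) (a + σ), ‖x i v - x i (min v a)‖ ≤ σ * Q := by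
    intro i v hv
    have hQ : 0 ≤ Q := (norm_nonneg _).trans (h i i a ha_mem a ha_mem)
    rcases le_total v a with hva | hav
    · simpa [min_eq_left hva] using mul_nonneg hσ.le hQ
    · rw [min_eq_right hav]
      calc ‖x i v - x i a‖
          ≤ Q * (v - a) :=
            norm_sub_le_of_hasDerivAt_Ioc hav
              ((hcont i).mono fun r hr => by simp only [mem_Ici]; linarith [hr.1])
              (fun r hr => hder i r (ha.trans_lt hr.1))
              (fun r hr => h.norm_deriv_le hστ hspeed (ha.trans_lt hr.1) (hr.2.trans hv.2) i)
        _ ≤ σ * Q := by nlinarith [hv.2]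
  intro i j s hs u hu
  have hs' : min s a ∈ Icc (-τ) a := ⟨le_min hs.1 (by linarith), min_le_right _ _⟩
  have hu' : min u a ∈ Icc (-τ) a := ⟨le_min hu.1 (by linarith), min_le_right _ _⟩
  calc ‖x i s - x j u‖
      ≤ ‖x i s - x i (min s a)‖ + ‖x i (min s a) - x j (min u a)‖ + ‖x j (min u a) - x j u‖ :=
        by simpa only [dist_eq_norm] using
          dist_triangle4 (x i s) (x i (min s a)) (x j (min u a)) (x j u)
    _ ≤ σ * Q + Q + σ * Q := by
        gcongr
        · exact retract i s hs
        · exact h i j _ hs' _ hu'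
        · rw [norm_sub_rev]; exact retract j u hu
    _ = (1 + 2 * σ) * Q := by ring

theorem trajectoryDiamLE_Icc_natCast_mul [NormedSpace ℝ E] (hσ : 0 < σ) (hστ : σ ≤ τ)
    (hcont : ∀ i, ContinuousOn (x i) (Ici (-τ)))
    (hder : ∀ i, ∀ t > 0, HasDerivAt (x i) (x' i t) t)
    (hspeed : SpeedLEDelayedDiam x x' σ τ)
    {Δ : ℝ} (h₀ : TrajectoryDiamLE x (Icc (-τ) 0) Δ) (k : ℕ) :
    TrajectoryDiamLE x (Icc (-τ) (k * σ)) ((1 + 2 * σ) ^ k * Δ) := by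
  induction k with
  | zero => simpa using h₀
  | succ k ih =>
    have := ih.extend hσ hστ (by positivity) hcont hder hspeed
    rwa [← mul_assoc, ← pow_succ', ← add_one_mul, ← Nat.cast_succ] at this

end Trajectories

theorem norm_sum_erase_hk_le {E : Type*} [NormedAddCommGroup E] [NormedSpace ℝ E] {N : ℕ}
    {ψ : ℝ → ℝ} (hψ₀ : ∀ s, 0 ≤ s → 0 ≤ ψ s) (hψ₁ : ∀ s, 0 ≤ s → ψ s ≤ 1)
    (y z : Fin N → E) (i : Fin N) {Q : ℝ} (h : ∀ j, ‖y i - z j‖ ≤ Q) :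
    ‖∑ j ∈ Finset.univ.erase i, (ψ ‖y i - z j‖ / (N - 1)) • (z j - y i)‖ ≤ Q := by
  have hN : (1 : ℝ) ≤ N := by exact_mod_cast i.pos
  have hQ : 0 ≤ Q := (norm_nonneg _).trans (h i)
  have hterm : ∀ j, ‖(ψ ‖y i - z j‖ / (N - 1)) • (z j - y i)‖ ≤ Q / (N - 1) := fun j => by
    rw [norm_smul, Real.norm_eq_abs,
      abs_of_nonneg (div_nonneg (hψ₀ _ (norm_nonneg _)) (by linarith)), div_mul_eq_mul_div]
    gcongr
    exact mul_le_of_le_one_left (norm_nonneg _) (hψ₁ _ (norm_nonneg _)) |>.trans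
      ((norm_sub_rev _ _).trans_le (h j))
  calc _ ≤ ∑ j ∈ Finset.univ.erase i, ‖(ψ ‖y i - z j‖ / (N - 1)) • (z j - y i)‖ :=
        norm_sum_le _ _
    _ ≤ ∑ _j ∈ Finset.univ.erase i, Q / (N - 1) := Finset.sum_le_sum fun j _ => hterm j
    _ = (N - 1) * (Q / (N - 1)) := by
        rw [Finset.sum_const, Finset.card_erase_of_mem (Finset.mem_univ i), Finset.card_univ,
          Fintype.card_fin, nsmul_eq_mul, Nat.cast_pred i.pos]
    _ ≤ Q := by
        rcases eq_or_lt_of_le (sub_nonneg.mpr hN) with hN1 | hN1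
        · simp [← hN1, hQ]
        · rw [mul_div_cancel₀ _ hN1.ne']

theorem speedLEDelayedDiam_of_hk {E : Type*} [NormedAddCommGroup E] [NormedSpace ℝ E] {N : ℕ}
    {ψ : ℝ → ℝ} (hψ₀ : ∀ s, 0 ≤ s → 0 ≤ ψ s) (hψ₁ : ∀ s, 0 ≤ s → ψ s ≤ 1)
    {x x' : Fin N → ℝ → E} {σ τ : ℝ}
    (hode : ∀ i, ∀ t > (0 : ℝ), x' i t = ∑ j ∈ Finset.univ.erase i,
      (ψ ‖x i (t - σ) - x j (t - τ)‖ / (N - 1)) • (x j (t - τ) - x i (t - σ))) :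
    SpeedLEDelayedDiam x x' σ τ := fun r hr Q hQ i => by
  rw [hode i r hr]
  exact norm_sum_erase_hk_le hψ₀ hψ₁ (fun j => x j (r - σ)) (fun j => x j (r - τ)) i (hQ i)

theorem trajectoryDiamLE_hkDelta0 {N d : ℕ} {τ : ℝ} {x : Fin N → ℝ → EuclideanSpace ℝ (Fin d)}
    (hcont : ∀ i, ContinuousOn (x i) (Icc (-τ) 0)) :
    TrajectoryDiamLE x (Icc (-τ) 0) (hkDelta0 τ x) := by
  obtain ⟨C, hC⟩ := isCompact_Icc.exists_bound_of_continuousOn (continuousOn_pi.mpr hcont)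
  have hx : ∀ i, ∀ s ∈ Icc (-τ) (0 : ℝ), ‖x i s‖ ≤ C := fun i s hs =>
    (norm_le_pi_norm (fun i => x i s) i).trans (hC s hs)
  have hpair : ∀ i j, ∀ s ∈ Icc (-τ) (0 : ℝ), ∀ u ∈ Icc (-τ) (0 : ℝ), ‖x i s - x j u‖ ≤ C + C :=
    fun i j s hs u hu => (norm_sub_le _ _).trans (add_le_add (hx i s hs) (hx j u hu))
  intro i j s hs u hu
  refine le_ciSup_of_le (Set.finite_range _).bddAbove i <|
    le_ciSup_of_le (Set.finite_range _).bddAbove j <|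
    le_ciSup_of_le ⟨C + C, ?_⟩ ⟨s, hs⟩ <|
    le_ciSup (f := fun u : Icc (-τ) (0 : ℝ) => ‖x i s - x j u‖) ⟨C + C, ?_⟩ ⟨u, hu⟩
  · rintro _ ⟨s', rfl⟩
    exact Real.iSup_le (fun u' => hpair i j _ s'.2 _ u'.2)
      ((norm_nonneg _).trans (hpair i j s hs u hu))
  · rintro _ ⟨u', rfl⟩
    exact hpair i j _ hs _ u'.2

theorem TrajectoryDiamLE.hkDiam_le {N d : ℕ} {x : Fin N → ℝ → EuclideanSpace ℝ (Fin d)}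
    {S : Set ℝ} {Q t : ℝ} (h : TrajectoryDiamLE x S Q) (ht : t ∈ S) (hQ : 0 ≤ Q) :
    hkDiam x t ≤ Q :=
  Real.iSup_le (fun i => Real.iSup_le (fun j => h i j t ht t ht) hQ) hQ

theorem hkMaxDer_nonneg_s11 {N d : ℕ} (x' : Fin N → ℝ → EuclideanSpace ℝ (Fin d)) (r : ℝ) :
    0 ≤ hkMaxDer x' r :=
  Real.iSup_nonneg fun _ => norm_nonneg _

theorem intervalIntegrable_hkMaxDer {N d : ℕ} {x x' : Fin N → ℝ → EuclideanSpace ℝ (Fin d)}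
    {t M : ℝ} (ht : 0 ≤ t) (hder : ∀ i, ∀ r > 0, HasDerivAt (x i) (x' i r) r)
    (hM : ∀ r ∈ Ioc 0 t, hkMaxDer x' r ≤ M) :
    IntervalIntegrable (hkMaxDer x') volume 0 t := by
  rw [intervalIntegrable_iff_integrableOn_Ioc_of_le ht]
  have hae : hkMaxDer x' =ᵐ[volume.restrict (Ioc 0 t)]
      fun r => ⨆ i, ‖deriv (x i) r‖ := by
    filter_upwards [ae_restrict_mem measurableSet_Ioc] with r hr
    simp only [hkMaxDer, (hder _ r hr.1).deriv]
  refine Integrable.mono' (g := fun _ => M) (integrableOn_const measure_Ioc_lt_top.ne)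
    ((Measurable.iSup fun i => (measurable_deriv (x i)).norm).aestronglyMeasurable.congr
      hae.symm) ?_
  filter_upwards [ae_restrict_mem measurableSet_Ioc] with r hr
  rw [Real.norm_eq_abs, abs_of_nonneg (hkMaxDer_nonneg_s11 x' r)]
  exact hM r hr

theorem integral_exp_neg_sub_mul_sub (t : ℝ) :
    ∫ s in (0 : ℝ)..t, exp (-(t - s)) * (t - s) = 1 - (1 + t) * exp (-t) := by
  have hderiv : ∀ s ∈ uIcc 0 t, HasDerivAt (fun s => (1 + (t - s)) * exp (-(t - s)))
      (exp (-(t - s)) * (t - s)) s := fun s _ => by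
    have h : HasDerivAt (fun s => t - s) (-1) s := by simpa using (hasDerivAt_id s).const_sub t
    have h' : HasDerivAt (fun s => -(t - s)) 1 s := h.neg.congr_deriv (neg_neg 1)
    exact ((h.const_add 1).mul h'.exp).congr_deriv (by ring)
  rw [intervalIntegral.integral_eq_sub_of_hasDerivAt hderiv
    ((by fun_prop : Continuous _).intervalIntegrable _ _)]
  simp

theorem integral_exp_neg_sub_mul_integral_le {g : ℝ → ℝ} {t M : ℝ} (ht : 0 ≤ t)
    (hg : IntervalIntegrable g volume 0 t) (hgM : ∀ r ∈ Ioc 0 t, g r ≤ M) :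
    ∫ s in (0 : ℝ)..t, exp (-(t - s)) * ∫ r in s..t, g r ≤ M * (1 - (1 + t) * exp (-t)) := by
  have hinner : ∀ s ∈ Icc 0 t, ∫ r in s..t, g r ≤ M * (t - s) := fun s hs => by
    have := intervalIntegral.integral_mono_on_of_le_Ioo hs.2
      (hg.mono_set (by rw [uIcc_of_le ht, uIcc_of_le hs.2]; exact Icc_subset_Icc hs.1 le_rfl))
      intervalIntegrable_const (fun r hr => hgM r ⟨hs.1.trans_lt hr.1, hr.2.le⟩)
    simpa [mul_comm] using this
  have hprim : ContinuousOn (fun s => ∫ r in s..t, g r) (uIcc 0 t) :=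
    intervalIntegral.continuousOn_primitive_interval_left (by
      rw [uIcc_of_le ht]; exact (intervalIntegrable_iff_integrableOn_Icc_of_le ht).mp hg)
  calc ∫ s in (0 : ℝ)..t, exp (-(t - s)) * ∫ r in s..t, g r
      ≤ ∫ s in (0 : ℝ)..t, M * (exp (-(t - s)) * (t - s)) := by
        refine intervalIntegral.integral_mono_on ht
          (((by fun_prop : Continuous fun s => exp (-(t - s))).continuousOn.mul
            hprim).intervalIntegrable)
          ((by fun_prop : Continuous _).intervalIntegrable _ _) fun s hs => ?_
        rw [mul_left_comm]
        exact mul_le_mul_of_nonneg_left (hinner s hs) (exp_pos _).le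
    _ = M * (1 - (1 + t) * exp (-t)) := by
        rw [intervalIntegral.integral_const_mul, integral_exp_neg_sub_mul_sub]

theorem antitoneOn_one_add_mul_exp_neg : AntitoneOn (fun a => (1 + a) * exp (-a)) (Ici 0) := by
  intro a ha b _ hab
  have hsplit : exp (-a) = exp (b - a) * exp (-b) := by rw [← exp_add]; ring_nf
  calc (1 + b) * exp (-b) ≤ (1 + a) * exp (b - a) * exp (-b) := by
        gcongr
        have ha : 0 ≤ a := ha
        nlinarith [mul_le_mul_of_nonneg_left (add_one_le_exp (b - a)) (by linarith : 0 ≤ 1 + a),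
          mul_nonneg ha (sub_nonneg.mpr hab)]
    _ = (1 + a) * exp (-a) := by rw [hsplit]; ring

theorem one_add_two_mul_pow_le_hkZ {σ : ℝ} (hσ : 0 < σ) (k : ℕ) : (1 + 2 * σ) ^ k ≤ hkZ σ k := by
  set r := √(σ * (1 + σ))
  have hr : 0 < r := sqrt_pos.mpr (by positivity)
  have hr2 : r ^ 2 = σ * (1 + σ) := sq_sqrt (by positivity)
  have hσr : σ ≤ r := by nlinarith
  have hr1 : r < 1 + σ := by nlinarith
  -- With `λ± = 1 + σ ± r`: `λ₊ ^ (k+1) - λ₋ ^ (k+1) ≥ λ₊ ^ k (λ₊ - λ₋) = 2 r λ₊ ^ k`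
  -- as `0 < λ₋ ≤ λ₊`, and `1 + 2σ ≤ λ₊`.
  have hpow : (1 + σ - r) ^ k ≤ (1 + σ + r) ^ k := pow_le_pow_left₀ (by linarith) (by linarith) k
  rw [hkZ, le_div_iff₀ (by positivity)]
  calc (1 + 2 * σ) ^ k * (2 * r) ≤ (1 + σ + r) ^ k * (2 * r) :=
        mul_le_mul_of_nonneg_right (pow_le_pow_left₀ (by positivity) (by linarith) k)
          (by positivity)
    _ ≤ (1 + σ + r) ^ (k + 1) - (1 + σ - r) ^ (k + 1) := by
        rw [pow_succ, pow_succ]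
        nlinarith [mul_le_mul_of_nonneg_right hpow (by linarith : 0 ≤ 1 + σ - r)]

theorem hkF_le {N d : ℕ} {x x' : Fin N → ℝ → EuclideanSpace ℝ (Fin d)} {β τ t A M : ℝ}
    (hβ : 0 ≤ β) (ht₀ : 0 ≤ t) (ht : t ≤ 2 * τ) (hdiam : hkDiam x t ≤ A)
    (hint : IntervalIntegrable (hkMaxDer x') volume 0 t)
    (hM : ∀ r ∈ Ioc 0 t, hkMaxDer x' r ≤ M) (hM₀ : 0 ≤ M) :
    hkF β τ x x' t ≤ A + β * (M * (1 - (1 + 2 * τ) * exp (-(2 * τ)))) := by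
  have hexp := antitoneOn_one_add_mul_exp_neg (mem_Ici.mpr ht₀) (mem_Ici.mpr (ht₀.trans ht)) ht
  rw [hkF, max_eq_left (by linarith : t - 2 * τ ≤ 0)]
  gcongr
  calc _ ≤ M * (1 - (1 + t) * exp (-t)) := integral_exp_neg_sub_mul_integral_le ht₀ hint hM
    _ ≤ _ := by gcongr

theorem stmt_11_general
    (N d : ℕ)
    (σ τ : ℝ) (hσ : 0 < σ) (hστ : σ ≤ τ)
    (K : ℕ) (hK : K = ⌈2 * τ / σ⌉₊)
    (β : ℝ) (hβ : 0 < β)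
    (ψ : ℝ → ℝ)
    (hψpos : ∀ s, 0 ≤ s → 0 < ψ s)
    (hψbdd : ∀ s, 0 ≤ s → ψ s ≤ 1)
    (x x' : Fin N → ℝ → EuclideanSpace ℝ (Fin d))
    (hxc : ∀ i, ContinuousOn (x i) (Set.Ici (-τ)))
    (hder : ∀ i, ∀ t > (0:ℝ), HasDerivAt (x i) (x' i t) t)
    (hode : ∀ i, ∀ t > (0:ℝ),
      x' i t = ∑ j ∈ Finset.univ.erase i,
        (ψ ‖x i (t - σ) - x j (t - τ)‖ / (N - 1)) • (x j (t - τ) - x i (t - σ))) :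
    ∀ t ∈ Set.Icc (0:ℝ) (2 * τ), hkF β τ x x' t ≤ hkCalZ σ τ β K * hkDelta0 τ x := by
  rintro t ⟨ht₀, ht⟩
  have hτ : 0 < τ := hσ.trans_le hστ
  have hΔ : 0 ≤ hkDelta0 τ x := Real.iSup_nonneg fun _ => Real.iSup_nonneg fun _ =>
    Real.iSup_nonneg fun _ => Real.iSup_nonneg fun _ => norm_nonneg _
  have hspeed := speedLEDelayedDiam_of_hk (fun s hs => (hψpos s hs).le) hψbdd hode
  have hdiam := trajectoryDiamLE_Icc_natCast_mul hσ hστ hxc hder hspeed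
    (trajectoryDiamLE_hkDelta0 fun i => (hxc i).mono fun s hs => hs.1)
  have hK₁ : 1 ≤ K := by rw [hK]; exact Nat.one_le_ceil_iff.mpr (by positivity)
  have hKσ : 2 * τ ≤ K * σ := by rw [← div_le_iff₀ hσ, hK]; exact Nat.le_ceil _
  have hKσ' : ((K - 1 : ℕ) : ℝ) * σ + σ = K * σ := by rw [Nat.cast_pred hK₁]; ring
  have hmaxDer : ∀ r ∈ Ioc 0 t, hkMaxDer x' r ≤ (1 + 2 * σ) ^ (K - 1) * hkDelta0 τ x :=
    fun r hr => Real.iSup_le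
      (fun i => (hdiam (K - 1)).norm_deriv_le hστ hspeed hr.1 (by linarith [hr.2]) i)
      (by positivity)
  have hF := hkF_le hβ.le ht₀ ht
    ((hdiam K).hkDiam_le ⟨by linarith, by linarith⟩ (by positivity))
    (intervalIntegrable_hkMaxDer ht₀ hder hmaxDer) hmaxDer (by positivity)
  have hc : 0 ≤ 1 - (1 + 2 * τ) * exp (-(2 * τ)) := by
    simpa using
      antitoneOn_one_add_mul_exp_neg self_mem_Ici (by positivity : 0 ≤ 2 * τ) (by positivity)
  calc hkF β τ x x' t
      ≤ (1 + 2 * σ) ^ K * hkDelta0 τ x + β * ((1 + 2 * σ) ^ (K - 1) * hkDelta0 τ x *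
          (1 - (1 + 2 * τ) * exp (-(2 * τ)))) := hF
    _ ≤ hkZ σ K * hkDelta0 τ x + β * (hkZ σ (K - 1) * hkDelta0 τ x *
          (1 - (1 + 2 * τ) * exp (-(2 * τ)))) := by
        gcongr <;> exact one_add_two_mul_pow_le_hkZ hσ _
    _ = hkCalZ σ τ β K * hkDelta0 τ x := by rw [hkCalZ]; ring

theorem stmt_11
    (N d : ℕ) (hN : 2 ≤ N) (hd : 1 ≤ d)
    (σ τ : ℝ) (hσ : 0 < σ) (hστ : σ ≤ τ)
    (K : ℕ) (hK : K = ⌈2 * τ / σ⌉₊)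
    (β : ℝ) (hβ : 0 < β)
    (ψ : ℝ → ℝ)
    (hψpos : ∀ s, 0 ≤ s → 0 < ψ s)
    (hψcont : ContinuousOn ψ (Set.Ici 0))
    (hψmono : ∀ s t, 0 ≤ s → s ≤ t → ψ t ≤ ψ s)
    (hψbdd : ∀ s, 0 ≤ s → ψ s ≤ 1)
    (x x' : Fin N → ℝ → EuclideanSpace ℝ (Fin d))
    (hxc : ∀ i, ContinuousOn (x i) (Set.Ici (-τ)))
    (hder : ∀ i, ∀ t > (0:ℝ), HasDerivAt (x i) (x' i t) t)
    (hode : ∀ i, ∀ t > (0:ℝ),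
      x' i t = ∑ j ∈ Finset.univ.erase i,
        (ψ ‖x i (t - σ) - x j (t - τ)‖ / (N - 1)) • (x j (t - τ) - x i (t - σ))) :
    ∀ t ∈ Set.Icc (0:ℝ) (2 * τ), hkF β τ x x' t ≤ hkCalZ σ τ β K * hkDelta0 τ x :=
  stmt_11_general N d σ τ hσ hστ K hK β hβ ψ hψpos hψbdd x x' hxc hder hode
end
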